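/- Let A ∈ F_q^{n×n} and C ∈ F_q^{k×k}. Suppose there exists a nonzero column vector v ∈ F_q^n with Av = 0 and a nonzero row vector w ∈ F_q^k with wC = 0. Then there exists a nonzero codeword B ∈ R(A,C) whose Hamming weight equals wt(v)·wt(w); consequently the minimum distance of the intertwining code R(A,C) (the least Hamming weight of a nonzero codeword) is at most wt(v)·wt(w). -/

import Mathlib

/-- Hamming weight of an `n × k` matrix: the number of nonzero entries. -/
def matrixWt {F : Type*} [Field F] [DecidableEq F] {n k : ℕ}
    (B : Matrix (Fin n) (Fin k) F) : ℕ :=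
  (Finset.univ.filter fun p : Fin n × Fin k => B p.1 p.2 ≠ 0).card

/-!
The outer product `B = v wᵀ` is the codeword: `A B = (A v) wᵀ = 0` and `B C = v (w C) = 0`, so `B`
intertwines `A` and `C`. Since a field has no zero divisors, `v i * w j ≠ 0` exactly when
`v i ≠ 0` and `w j ≠ 0`, so the support of `B` is the product of the supports of `v` and `w`.
-/

open Matrix

theorem Matrix.vecMulVec_intertwines {R l m : Type*} [Semiring R] [Fintype l] [Fintype m]
    {A : Matrix l l R} {C : Matrix m m R} {v : l → R} {w : m → R}
    (hv : A *ᵥ v = 0) (hw : w ᵥ* C = 0) :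
    A * vecMulVec v w = vecMulVec v w * C := by
  rw [mul_vecMulVec, vecMulVec_mul, hv, hw]
  ext
  simp [vecMulVec_apply]

section matrixWt

variable {F : Type*} [Field F] [DecidableEq F] {n k : ℕ}

@[simp]
theorem matrixWt_zero : matrixWt (0 : Matrix (Fin n) (Fin k) F) = 0 := by
  simp [matrixWt]

theorem matrixWt_vecMulVec (v : Fin n → F) (w : Fin k → F) :
    matrixWt (vecMulVec v w) = hammingNorm v * hammingNorm w := by
  rw [matrixWt, hammingNorm, hammingNorm, ← Finset.card_product, ← Finset.filter_product]
  simp only [vecMulVec_apply, ne_eq, mul_eq_zero, not_or, Finset.univ_product_univ]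

end matrixWt

/-- If `v ≠ 0` with `A·v = 0` and `w ≠ 0` with `w·C = 0`, then
there is a nonzero codeword `B ∈ R(A,C)` of Hamming weight `wt(v)·wt(w)`;
consequently the minimum distance of `R(A,C)` (the least weight of a nonzero
codeword) is at most `wt(v)·wt(w)`. -/
theorem intertwining_min_distance_le_outer_weight
    (F : Type*) [Field F] [DecidableEq F] (n k : ℕ)
    (A : Matrix (Fin n) (Fin n) F) (C : Matrix (Fin k) (Fin k) F)
    (v : Fin n → F) (w : Fin k → F) (hv0 : v ≠ 0) (hw0 : w ≠ 0)
    (hv : A.mulVec v = 0) (hw : Matrix.vecMul w C = 0) :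
    (∃ B : Matrix (Fin n) (Fin k) F,
        B ≠ 0 ∧ A * B = B * C ∧ matrixWt B = hammingNorm v * hammingNorm w) ∧
    sInf {m : ℕ | ∃ B : Matrix (Fin n) (Fin k) F,
        B ≠ 0 ∧ A * B = B * C ∧ matrixWt B = m} ≤
      hammingNorm v * hammingNorm w := by
  have hwt := matrixWt_vecMulVec v w
  have hne : vecMulVec v w ≠ 0 := by
    intro h
    rw [h, matrixWt_zero] at hwt
    exact mul_ne_zero (hammingNorm_ne_zero_iff.2 hv0) (hammingNorm_ne_zero_iff.2 hw0) hwt.symm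
  have hAB := vecMulVec_intertwines hv hw
  exact ⟨⟨_, hne, hAB, hwt⟩, Nat.sInf_le ⟨_, hne, hAB, hwt⟩⟩
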